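/- Let A|B be an H-separable extension with B a simple ring and A_B finitely generated projective. Then A is a simple ring. -/

import Mathlib

open TensorProduct

noncomputable section

namespace D2

variable (A : Type*) [Ring A] (B : Subring A)

/-- The defining relations of `A ⊗_B A` as a quotient of `A ⊗_ℤ A`. -/
def relSub : Submodule ℤ (A ⊗[ℤ] A) :=
  Submodule.span ℤ {x | ∃ (a c : A) (b : B), x = (a * (b : A)) ⊗ₜ[ℤ] c - a ⊗ₜ[ℤ] ((b : A) * c)}

/-- The tensor square `A ⊗_B A` of a ring extension `B ⊆ A`. -/
abbrev TensorSq := (A ⊗[ℤ] A) ⧸ relSub A B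

/-- The class of a simple tensor `a ⊗_B c`. -/
def tmulB (a c : A) : TensorSq A B := Submodule.Quotient.mk (a ⊗ₜ[ℤ] c)

/-- Left multiplication `a₀ • (x ⊗ y) = (a₀ x) ⊗ y` on `A ⊗_B A`. -/
def lmul (a : A) : TensorSq A B →ₗ[ℤ] TensorSq A B :=
  Submodule.mapQ _ _ (TensorProduct.map (LinearMap.mulLeft ℤ a) LinearMap.id) (by
    rw [relSub, Submodule.span_le]
    rintro x ⟨a', c, b, rfl⟩
    simp only [SetLike.mem_coe, Submodule.mem_comap, map_sub, TensorProduct.map_tmul,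
      LinearMap.mulLeft_apply, LinearMap.id_apply]
    erw [Submodule.mem_comap, map_sub, TensorProduct.map_tmul, TensorProduct.map_tmul]
    refine Submodule.subset_span ⟨a * a', c, b, by
      simp only [LinearMap.mulLeft_apply, LinearMap.id_apply, mul_assoc]⟩)

/-- Right multiplication `(x ⊗ y) • a₀ = x ⊗ (y a₀)` on `A ⊗_B A`. -/
def rmul (a : A) : TensorSq A B →ₗ[ℤ] TensorSq A B :=
  Submodule.mapQ _ _ (TensorProduct.map LinearMap.id (LinearMap.mulRight ℤ a)) (by
    rw [relSub, Submodule.span_le]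
    rintro x ⟨a', c, b, rfl⟩
    simp only [SetLike.mem_coe, Submodule.mem_comap, map_sub, TensorProduct.map_tmul,
      LinearMap.mulRight_apply, LinearMap.id_apply]
    erw [Submodule.mem_comap, map_sub, TensorProduct.map_tmul, TensorProduct.map_tmul]
    refine Submodule.subset_span ⟨a', c * a, b, by
      simp only [LinearMap.mulRight_apply, LinearMap.id_apply, mul_assoc]⟩)

/-- The multiplication map `A ⊗_B A → A`, `x ⊗ y ↦ x y`. -/
def mulQ : TensorSq A B →ₗ[ℤ] A :=
  Submodule.liftQ _ (LinearMap.mul' ℤ A) (by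
    rw [relSub, Submodule.span_le]
    rintro x ⟨a, c, b, rfl⟩
    simp [LinearMap.mem_ker, mul_assoc]
    erw [LinearMap.mem_ker, map_sub, LinearMap.mul'_apply, LinearMap.mul'_apply]
    simp [mul_assoc])

/-- An element `t` of `A ⊗_B A` is `B`-central when `b t = t b` for all `b ∈ B`. -/
def IsBCentral (t : TensorSq A B) : Prop := ∀ b ∈ B, lmul A B b t = rmul A B b t

/-- An element `t` of `A ⊗_B A` is `A`-central (a Casimir element) when `a t = t a`. -/
def IsACentral (t : TensorSq A B) : Prop := ∀ a : A, lmul A B a t = rmul A B a t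

/-- A `B`-`B`-bimodule endomorphism of `A`. -/
def IsBB (α : A →ₗ[ℤ] A) : Prop :=
  ∀ b ∈ B, ∀ a : A, α ((b : A) * a) = b * α a ∧ α (a * b) = α a * b

/-- A right `B`-module endomorphism of `A`. -/
def IsRightB (f : A →ₗ[ℤ] A) : Prop := ∀ a : A, ∀ b ∈ B, f (a * b) = f a * b

/-- `x ↦ (x·) ⊗ id` as a linear map, used to build Sweedler-type expressions. -/
def lmulTen : A →ₗ[ℤ] (A ⊗[ℤ] A) →ₗ[ℤ] (A ⊗[ℤ] A) where
  toFun a := TensorProduct.map (LinearMap.mulLeft ℤ a) LinearMap.id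
  map_add' a a' := by
    apply TensorProduct.ext'
    intro x y
    simp [add_mul, TensorProduct.add_tmul]
    rfl
  map_smul' z a := by
    apply TensorProduct.ext'
    intro x y
    simp only [TensorProduct.map_tmul, LinearMap.mulLeft_apply, LinearMap.id_apply,
      LinearMap.smul_apply, RingHom.id_apply, smul_mul_assoc, TensorProduct.smul_tmul']
    rfl

/-- For `ζ = Σ u ⊗ v`, the map `a ↦ Σ α(a u) v`, i.e. `α(? ζ¹) ζ²`. -/
def sweed (α : A →ₗ[ℤ] A) (ζ : A ⊗[ℤ] A) : A →ₗ[ℤ] A :=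
  ((LinearMap.mul' ℤ A).comp (TensorProduct.map α LinearMap.id)).comp ((lmulTen A).flip ζ)

/-- For `ζ = Σ u ⊗ v`, the element `Σ u r v` ("sandwich" evaluation `ζ¹ r ζ²`). -/
def sandw (r : A) (ζ : A ⊗[ℤ] A) : A :=
  (LinearMap.mul' ℤ A) ((TensorProduct.map (LinearMap.mulRight ℤ r) LinearMap.id) ζ)

/-- `mul₂ ζ ξ = Σ (u x) ⊗ (y v)` for `ζ = Σ u ⊗ v`, `ξ = Σ x ⊗ y`:
the product `ξ ·_T ζ` of two elements of `T = (A ⊗_B A)^B` on representatives. -/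
def mul₂ : (A ⊗[ℤ] A) →ₗ[ℤ] (A ⊗[ℤ] A) →ₗ[ℤ] (A ⊗[ℤ] A) :=
  TensorProduct.lift <| LinearMap.mk₂ ℤ
    (fun u v => TensorProduct.map (LinearMap.mulLeft ℤ u) (LinearMap.mulRight ℤ v))
    (fun u u' v => by
      apply TensorProduct.ext'
      intro x y
      simp [add_mul, TensorProduct.add_tmul]
      rfl)
    (fun z u v => by
      apply TensorProduct.ext'
      intro x y
      simp only [TensorProduct.map_tmul, LinearMap.mulLeft_apply, LinearMap.mulRight_apply,
        LinearMap.smul_apply, smul_mul_assoc, TensorProduct.smul_tmul']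
      rfl)
    (fun u v v' => by
      apply TensorProduct.ext'
      intro x y
      simp [mul_add, TensorProduct.tmul_add]
      rfl)
    (fun z u v => by
      apply TensorProduct.ext'
      intro x y
      simp only [TensorProduct.map_tmul, LinearMap.mulLeft_apply, LinearMap.mulRight_apply,
        LinearMap.smul_apply, mul_smul_comm, TensorProduct.tmul_smul]
      rfl)

/-- `A` is balanced as a right `B`-module. -/
def RightBalanced : Prop :=
  ∀ φ : A →+ A,
    (∀ f : A →+ A, (∀ a : A, ∀ b ∈ B, f (a * b) = f a * b) → ∀ a, φ (f a) = f (φ a)) →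
    ∃ b ∈ B, ∀ a, φ a = a * b

end D2

end




open TensorProduct in
/-- The map `A ⊗_B A → A`, `u ⊗ v ↦ f(u) v`, for `f` right `B`-linear. -/
noncomputable def D2.Ffun {A : Type*} [Ring A] (B : Subring A) (f : A →ₗ[ℤ] A)
    (hf : D2.IsRightB A B f) : D2.TensorSq A B →ₗ[ℤ] A :=
  Submodule.liftQ _ ((LinearMap.mul' ℤ A).comp (TensorProduct.map f LinearMap.id)) (by
    rw [D2.relSub, Submodule.span_le]
    rintro x ⟨a, c, b, rfl⟩
    simp only [SetLike.mem_coe, LinearMap.mem_ker, map_sub, LinearMap.comp_apply,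
      TensorProduct.map_tmul, LinearMap.id_apply, LinearMap.mul'_apply]
    show (LinearMap.mul' ℤ A) (TensorProduct.map f LinearMap.id ((a * b) ⊗ₜ[ℤ] c)) -
      (LinearMap.mul' ℤ A) (TensorProduct.map f LinearMap.id (a ⊗ₜ[ℤ] ((b : A) * c))) = 0
    simp only [TensorProduct.map_tmul, LinearMap.id_apply, LinearMap.mul'_apply]
    rw [hf a b b.2, mul_assoc, sub_self])

open TensorProduct in
lemma D2.Ffun_rmul {A : Type*} [Ring A] (B : Subring A) (f : A →ₗ[ℤ] A)
    (hf : D2.IsRightB A B f) (c : A) (t : D2.TensorSq A B) :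
    D2.Ffun B f hf (D2.rmul A B c t) = D2.Ffun B f hf t * c := by
  obtain ⟨y, rfl⟩ := Submodule.Quotient.mk_surjective _ t
  show (LinearMap.mul' ℤ A) (TensorProduct.map f LinearMap.id
      (TensorProduct.map LinearMap.id (LinearMap.mulRight ℤ c) y)) =
    (LinearMap.mul' ℤ A) (TensorProduct.map f LinearMap.id y) * c
  induction y using TensorProduct.induction_on with
  | zero => simp [D2.Ffun]
  | tmul u v =>
      simp only [D2.Ffun, TensorProduct.map_tmul, LinearMap.id_apply,
        LinearMap.mulRight_apply, Submodule.liftQ_apply, LinearMap.comp_apply,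
        LinearMap.mul'_apply, mul_assoc]
  | add u v hu hv =>
      simp only [map_add, Submodule.Quotient.mk_add] at hu hv ⊢
      rw [hu, hv, add_mul]

open TensorProduct in
lemma D2.lmul_lmul {A : Type*} [Ring A] (B : Subring A) (a c : A) (t : D2.TensorSq A B) :
    D2.lmul A B a (D2.lmul A B c t) = D2.lmul A B (a * c) t := by
  obtain ⟨y, rfl⟩ := Submodule.Quotient.mk_surjective _ t
  show Submodule.Quotient.mk (TensorProduct.map (LinearMap.mulLeft ℤ a) LinearMap.id
      (TensorProduct.map (LinearMap.mulLeft ℤ c) LinearMap.id y)) =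
    (Submodule.Quotient.mk (TensorProduct.map (LinearMap.mulLeft ℤ (a * c)) LinearMap.id y) :
      D2.TensorSq A B)
  refine congrArg Submodule.Quotient.mk ?_
  induction y using TensorProduct.induction_on with
  | zero => simp
  | tmul u v => simp [mul_assoc]
  | add u v hu hv => simp only [map_add, hu, hv]

open TensorProduct in
/-- The key identity: any right `B`-linear endomorphism of `A` is of the form
`x ↦ ∑ cᵢ x rᵢ` for an H-separable extension. -/
lemma D2.key {A : Type*} [Ring A] (B : Subring A) (f : A →ₗ[ℤ] A)
    (hf : D2.IsRightB A B f)
    (n : ℕ) (e : Fin n → A ⊗[ℤ] A) (r : Fin n → A)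
    (hce : ∀ i, D2.IsACentral A B (Submodule.Quotient.mk (e i)))
    (hsys : ∑ i, D2.lmul A B (r i) (Submodule.Quotient.mk (e i)) = D2.tmulB A B 1 1)
    (x : A) :
    f x = ∑ i, D2.Ffun B f hf (Submodule.Quotient.mk (e i)) * (x * r i) := by
  have h0 : f x = D2.Ffun B f hf (D2.lmul A B x (D2.tmulB A B 1 1)) := by
    show f x = (LinearMap.mul' ℤ A) (TensorProduct.map f LinearMap.id
      (TensorProduct.map (LinearMap.mulLeft ℤ x) LinearMap.id (1 ⊗ₜ[ℤ] 1)))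
    simp only [D2.Ffun, D2.lmul, D2.tmulB, Submodule.mapQ_apply, TensorProduct.map_tmul,
      LinearMap.mulLeft_apply, LinearMap.id_apply, Submodule.liftQ_apply, LinearMap.comp_apply,
      LinearMap.mul'_apply, mul_one]
  rw [h0, ← hsys, map_sum, map_sum]
  congr 1
  ext i
  rw [D2.lmul_lmul, hce i (x * r i), D2.Ffun_rmul]

open TensorProduct in
/-- an H-separable extension of a simple ring `B` with `A_B` f.g. projective
has `A` simple. -/
theorem stmt11 {A : Type*} [Ring A] (B : Subring A)
    (hBsimple : IsSimpleRing B)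
    -- A_B finitely generated projective: a dual basis
    (N : ℕ) (aB : Fin N → A) (fB : Fin N → (A →ₗ[ℤ] A))
    (hfB : ∀ j, D2.IsRightB A B (fB j)) (hfBval : ∀ j a, fB j a ∈ B)
    (hdb : ∀ a : A, a = ∑ j, aB j * fB j a)
    -- H-separability system
    (n : ℕ) (e : Fin n → A ⊗[ℤ] A) (r : Fin n → A)
    (hce : ∀ i, D2.IsACentral A B (Submodule.Quotient.mk (e i)))
    (hr : ∀ i, r i ∈ Subring.centralizer (B : Set A))
    (hsys : ∑ i, D2.lmul A B (r i) (Submodule.Quotient.mk (e i)) = D2.tmulB A B 1 1) :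
    IsSimpleRing A := by
  haveI : Nontrivial A := by
    refine ⟨0, 1, fun h => ?_⟩
    exact zero_ne_one (α := B) (Subtype.ext (by simpa using h))
  refine ⟨⟨fun I => ?_⟩⟩
  by_cases hI : I = ⊥
  · exact Or.inl hI
  · refine Or.inr ?_
    -- pick a nonzero element of I
    obtain ⟨x, hxI, hx0⟩ : ∃ x, x ∈ I ∧ x ≠ 0 := by
      by_contra h
      push_neg at h
      refine hI (SetLike.ext fun y => ?_)
      rw [TwoSidedIdeal.mem_bot]
      exact ⟨fun hy => h y hy, fun hy => hy ▸ I.zero_mem⟩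
    -- each fB j x lies in I
    have hmemI : ∀ j, fB j x ∈ I := by
      intro j
      rw [D2.key B (fB j) (hfB j) n e r hce hsys x]
      exact sum_mem fun i _ => I.mul_mem_left _ _ (I.mul_mem_right _ _ hxI)
    -- some fB j x is nonzero
    obtain ⟨j, hj⟩ : ∃ j, fB j x ≠ 0 := by
      by_contra h
      push_neg at h
      exact hx0 (by rw [hdb x]; simp [h])
    -- the ideal of B of elements lying in I
    set J : TwoSidedIdeal B := I.comap (B.subtype : B →+* A) with hJ
    have hJne : J ≠ ⊥ := by
      intro hbot
      have : (⟨fB j x, hfBval j x⟩ : B) ∈ J :=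
        (TwoSidedIdeal.mem_comap _).2 (by simpa using hmemI j)
      rw [hbot, TwoSidedIdeal.mem_bot] at this
      exact hj (by simpa using congrArg (Subtype.val) this)
    have hJtop : J = ⊤ := (hBsimple.simple.eq_bot_or_eq_top J).resolve_left hJne
    have h1 : (1 : A) ∈ I := by
      have : (1 : B) ∈ J := hJtop ▸ trivial
      simpa using (TwoSidedIdeal.mem_comap _).1 this
    exact TwoSidedIdeal.one_mem_iff I |>.1 h1
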